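/- Let ξ be a real irrational number. Then τ(ξ) = 0 if and only if ξ is a Liouville number, where τ(ξ) = sup T(ξ) (with sup ∅ = 0) and T(ξ) is the set of all τ > 0 for which there exist integer sequences (u_n), (v_n) with u_n ≠ 0 for all n, u_n ξ − v_n → 0, |u_{n+1} ξ − v_{n+1}| = |u_n ξ − v_n|^{1+o(1)}, and |u_n ξ − v_n| ≤ |u_n|^{−τ+o(1)}. -/

import Mathlib

open Filter Topology

/-- The irrationality exponent of a real number, as an extended real:
the infimum of all real `μ` such that `|ξ - p/q| > 1/q^μ` for all integers `p, q`
with `q` sufficiently large (`⊤` if no such real `μ` exists). -/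
noncomputable def irrationalityExponent (ξ : ℝ) : EReal :=
  sInf {x : EReal | ∃ μ : ℝ, x = (μ : EReal) ∧
    ∀ᶠ q : ℕ in atTop, ∀ p : ℤ, |ξ - (p : ℝ) / (q : ℝ)| > 1 / (q : ℝ) ^ μ}

/-- The set `T(ξ)` of all `τ > 0` for which there exist integer sequences `(u_n)`, `(v_n)`
with `u_n ≠ 0`, `u_n ξ - v_n → 0`, `|u_{n+1} ξ - v_{n+1}| = |u_n ξ - v_n|^{1+o(1)}` and
`|u_n ξ - v_n| ≤ |u_n|^{-τ+o(1)}`. -/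
def TSet (ξ : ℝ) : Set ℝ :=
  {τ : ℝ | 0 < τ ∧ ∃ u v : ℕ → ℤ, (∀ n, u n ≠ 0) ∧
    Tendsto (fun n => (u n : ℝ) * ξ - (v n : ℝ)) atTop (𝓝 0) ∧
    (∃ δ : ℕ → ℝ, Tendsto δ atTop (𝓝 0) ∧ ∀ n,
      |(u (n + 1) : ℝ) * ξ - (v (n + 1) : ℝ)| = |(u n : ℝ) * ξ - (v n : ℝ)| ^ (1 + δ n)) ∧
    (∃ δ : ℕ → ℝ, Tendsto δ atTop (𝓝 0) ∧ ∀ n,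
      |(u n : ℝ) * ξ - (v n : ℝ)| ≤ |(u n : ℝ)| ^ (-τ + δ n))}

/-- The set `T'(ξ)` of all `τ > 0` for which there exist integer sequences `(u_n)`, `(v_n)`
and `0 < α < 1 < β` with `|u_n ξ - v_n|^{1/n} → α`, `limsup |u_n|^{1/n} ≤ β` and
`τ = -log α / log β`. -/
def TSet' (ξ : ℝ) : Set ℝ :=
  {τ : ℝ | 0 < τ ∧ ∃ u v : ℕ → ℤ, ∃ α β : ℝ, 0 < α ∧ α < 1 ∧ 1 < β ∧
    Tendsto (fun n => |(u n : ℝ) * ξ - (v n : ℝ)| ^ (1 / (n : ℝ))) atTop (𝓝 α) ∧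
    limsup (fun n => ((|(u n : ℝ)| ^ (1 / (n : ℝ)) : ℝ) : EReal)) atTop ≤ (β : EReal) ∧
    τ = -Real.log α / Real.log β}

/-- The set `T''(ξ)` of all `τ > 0` such that, for any increasing sequence `(Q_n)` of
positive integers, there exist integer sequences `(u_n)`, `(v_n)` with
`|u_n| ≤ Q_n^{1+o(1)}` and `|u_n ξ - v_n| = Q_n^{-τ+o(1)}`. -/
def TSet'' (ξ : ℝ) : Set ℝ :=
  {τ : ℝ | 0 < τ ∧ ∀ Q : ℕ → ℕ, StrictMono Q → (∀ n, 0 < Q n) →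
    ∃ u v : ℕ → ℤ,
      (∃ δ : ℕ → ℝ, Tendsto δ atTop (𝓝 0) ∧ ∀ n,
        |(u n : ℝ)| ≤ (Q n : ℝ) ^ (1 + δ n)) ∧
      (∃ δ : ℕ → ℝ, Tendsto δ atTop (𝓝 0) ∧ ∀ n,
        |(u n : ℝ) * ξ - (v n : ℝ)| = (Q n : ℝ) ^ (-τ + δ n))}

/-- The set `T'''(ξ)` of all `τ > 0` such that, for any sequences `(Q_n)`, `(ε_n)` of
positive real numbers with `Q_n → ∞`, `ε_n → 0` and `ε_n ≥ Q_n^{-τ+o(1)}`, there exist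
integer sequences `(u_n)`, `(v_n)` with `u_n / Q_n → 1` and `(u_n ξ - v_n)/ε_n → 1`. -/
def TSet''' (ξ : ℝ) : Set ℝ :=
  {τ : ℝ | 0 < τ ∧ ∀ Q ε : ℕ → ℝ, (∀ n, 0 < Q n) → (∀ n, 0 < ε n) →
    Tendsto Q atTop atTop → Tendsto ε atTop (𝓝 0) →
    (∃ δ : ℕ → ℝ, Tendsto δ atTop (𝓝 0) ∧ ∀ n, ε n ≥ Q n ^ (-τ + δ n)) →
    ∃ u v : ℕ → ℤ,
      Tendsto (fun n => (u n : ℝ) / Q n) atTop (𝓝 1) ∧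
      Tendsto (fun n => ((u n : ℝ) * ξ - (v n : ℝ)) / ε n) atTop (𝓝 1)}

/-- `τ(ξ) = sup T(ξ)` (with `sup ∅ = 0`, as for the real `sSup`). -/
noncomputable def tauExp (ξ : ℝ) : ℝ := sSup (TSet ξ)

/-- `τ'(ξ) = sup T'(ξ)` (with `sup ∅ = 0`, as for the real `sSup`). -/
noncomputable def tauExp' (ξ : ℝ) : ℝ := sSup (TSet' ξ)

/-- `τ''(ξ) = sup T''(ξ)` (with `sup ∅ = 0`, as for the real `sSup`). -/
noncomputable def tauExp'' (ξ : ℝ) : ℝ := sSup (TSet'' ξ)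

/-- `τ'''(ξ) = sup T'''(ξ)` (with `sup ∅ = 0`, as for the real `sSup`). -/
noncomputable def tauExp''' (ξ : ℝ) : ℝ := sSup (TSet''' ξ)

/-! If `ξ` has an irrationality measure `μ`, then `|u ξ - v| > |u|^{1-μ}` for large `|u|`, which
forces `τ ≤ μ - 1` for every `τ ∈ T(ξ)`. On the other hand, multiplying a Dirichlet approximation
`(q, p)` of quality `t` by `⌊t / |qξ - p|⌋` gives a pair with `|uξ - v| ∈ (t/2, t]` and
`u < t^{1-μ}`; taking `t = e^{-(n+1)}` produces a sequence witnessing `1/μ ∈ T(ξ)` (for `μ ≥ 1`),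
so `τ(ξ) > 0`.

If `ξ` is a Liouville number and `τ ∈ T(ξ)`, take a very good approximation `p/q` and the first
index `m` with `|u_m ξ - v_m| ≤ 1/(3q)`. Since the errors decay slowly, `|u_m ξ - v_m|` is not much
smaller than `1/(3q)`, so `|u_m|` is at most a power of `q`. The integer `u_m p - q v_m` is either
`0` or of absolute value at least `1`, and in both cases `q |u_m ξ - v_m| ≤ |u_m| |qξ - p|`,
which is far too small. -/

open Real

theorem exists_nat_mul_mem_Ioc {d t : ℝ} (hd : 0 < d) (hdt : d ≤ t) :
    ∃ m : ℕ, 0 < m ∧ m * d ∈ Set.Ioc (t / 2) t := by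
  have hm : 1 ≤ t / d := (one_le_div hd).2 hdt
  refine ⟨⌊t / d⌋₊, Nat.floor_pos.2 hm, ?_, (le_div_iff₀ hd).1 (Nat.floor_le (by linarith))⟩
  have h1 : (1 : ℝ) ≤ ⌊t / d⌋₊ := by exact_mod_cast Nat.floor_pos.2 hm
  have h2 : t < (⌊t / d⌋₊ + 1) * d := (div_lt_iff₀ hd).1 (Nat.lt_floor_add_one _)
  nlinarith

theorem exists_lt_and_succ_le {α : Type*} [LinearOrder α] {L : ℕ → α} {θ : α} {N : ℕ}
    (hN : θ < L N) (h : ∀ᶠ n in atTop, L n ≤ θ) : ∃ m, N ≤ m ∧ θ < L m ∧ L (m + 1) ≤ θ := by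
  by_contra! hstep
  have hall : ∀ m, N ≤ m → θ < L m := fun m hm =>
    Nat.le_induction hN (fun k hk ih => hstep k hk ih) m hm
  obtain ⟨m, hm, hmN⟩ := (h.and (eventually_ge_atTop N)).exists
  exact (hall m hmN).not_ge hm

theorem abs_mul_abs_mul_sub_le_of_le_half (ξ : ℝ) (u v q p : ℤ)
    (h : |(q : ℝ)| * |u * ξ - v| ≤ 1 / 2) : |(q : ℝ)| * |u * ξ - v| ≤ |(u : ℝ)| * |q * ξ - p| := by
  set D : ℤ := u * p - q * v
  have hD : (D : ℝ) = q * (u * ξ - v) - u * (q * ξ - p) := by push_cast [D]; ring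
  rcases eq_or_ne D 0 with hD0 | hD0
  · have heq : (q : ℝ) * (u * ξ - v) = u * (q * ξ - p) := by
      rw [← sub_eq_zero, ← hD, hD0, Int.cast_zero]
    rw [← abs_mul, ← abs_mul, heq]
  · have h1 : (1 : ℝ) ≤ |(D : ℝ)| := by exact_mod_cast Int.one_le_abs hD0
    have h2 := abs_sub (q * (u * ξ - v) : ℝ) (u * (q * ξ - p))
    rw [← hD, abs_mul, abs_mul] at h2
    linarith

theorem log_lt_mul_log_of_mul_le {q u d t μ : ℝ} (hq : 0 < q) (hu : 0 < u) (hd : 0 < d)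
    (ht : 0 < t) (hμ : 0 ≤ μ) (hqt : q ≤ 1 / t) (hdq : (1 - μ) * log q < log d)
    (hud : u * d ≤ t * q) : log u < (1 - μ) * log t := by
  have hprod : log u + log d ≤ log t + log q := by
    rw [← log_mul hu.ne' hd.ne', ← log_mul ht.ne' hq.ne']
    exact log_le_log (by positivity) hud
  have hlogq : log q ≤ -log t := by simpa using log_le_log hq hqt
  nlinarith [mul_le_mul_of_nonneg_left hlogq hμ]

theorem le_rpow_neg_of_log_lt_mul_log {L u t μ τ : ℝ} (hL : 0 < L) (hu : 0 < u) (ht : 0 < t)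
    (ht1 : t < 1) (hLt : L ≤ t) (hτ : 0 < τ) (hτμ : τ * (μ - 1) < 1)
    (hlog : log u < (1 - μ) * log t) : L ≤ u ^ (-τ) := by
  rw [← log_le_log_iff hL (rpow_pos_of_pos hu _), log_rpow hu]
  nlinarith [log_le_log hL hLt, mul_lt_mul_of_pos_left hlog hτ,
    mul_neg_of_pos_of_neg (sub_pos.2 hτμ) (log_neg ht ht1)]

section ExponentPerturbation

variable {L a δ : ℕ → ℝ} {τ : ℝ}

theorem exists_tendsto_zero_forall_le_rpow (hL : ∀ n, L n ≤ 1)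
    (h : ∀ᶠ n in atTop, L n ≤ a n ^ (-τ)) :
    ∃ δ : ℕ → ℝ, Tendsto δ atTop (𝓝 0) ∧ ∀ n, L n ≤ a n ^ (-τ + δ n) := by
  classical
  refine ⟨fun n => if L n ≤ a n ^ (-τ) then 0 else τ, ?_, fun n => ?_⟩
  · exact tendsto_const_nhds.congr' (h.mono fun n hn => by simp [hn])
  · dsimp only
    split_ifs with hn
    · simpa using hn
    · simpa using hL n

theorem exists_tendsto_zero_forall_succ_eq_rpow (hpos : ∀ n, 0 < L n) (hlt : ∀ n, L n < 1)
    (hlog : Tendsto (fun n => log (L n)) atTop atBot) {C : ℝ}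
    (hC : ∀ n, |log (L (n + 1)) - log (L n)| ≤ C) :
    ∃ δ : ℕ → ℝ, Tendsto δ atTop (𝓝 0) ∧ ∀ n, L (n + 1) = L n ^ (1 + δ n) := by
  have hne : ∀ n, log (L n) ≠ 0 := fun n => (log_neg (hpos n) (hlt n)).ne
  refine ⟨fun n => (log (L (n + 1)) - log (L n)) / log (L n), ?_, fun n => ?_⟩
  · refine squeeze_zero_norm (fun n => ?_)
      ((tendsto_const_nhds (x := C)).div_atTop (tendsto_abs_atBot_atTop.comp hlog))
    rw [norm_div, Real.norm_eq_abs, Real.norm_eq_abs]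
    exact div_le_div_of_nonneg_right (hC n) (abs_nonneg _)
  · rw [rpow_def_of_pos (hpos n), ← exp_log (hpos (n + 1))]
    congr 1
    field_simp [hne n]
    ring

theorem eventually_le_rpow_neg_of_le_rpow (ha : ∀ n, 1 ≤ a n) (hδ : Tendsto δ atTop (𝓝 0))
    (hle : ∀ n, L n ≤ a n ^ (-τ + δ n)) {σ : ℝ} (hσ : σ < τ) :
    ∀ᶠ n in atTop, L n ≤ a n ^ (-σ) := by
  filter_upwards [hδ.eventually (ge_mem_nhds (sub_pos.2 hσ))] with n hn
  exact (hle n).trans (rpow_le_rpow_of_exponent_le (ha n) (by linarith))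

theorem eventually_rpow_le_succ_of_eq_rpow (hpos : ∀ n, 0 < L n) (hL : Tendsto L atTop (𝓝 0))
    (hδ : Tendsto δ atTop (𝓝 0)) (hstep : ∀ n, L (n + 1) = L n ^ (1 + δ n)) {κ : ℝ}
    (hκ : 1 < κ) : ∀ᶠ n in atTop, L n ^ κ ≤ L (n + 1) := by
  filter_upwards [hL.eventually (gt_mem_nhds one_pos),
    hδ.eventually (ge_mem_nhds (sub_pos.2 hκ))] with n h1 hn
  rw [hstep n]
  exact rpow_le_rpow_of_exponent_ge (hpos n) h1.le (by linarith)

end ExponentPerturbation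

def IsIrrationalityMeasure (ξ μ : ℝ) : Prop :=
  ∀ᶠ q : ℕ in atTop, ∀ p : ℤ, |ξ - (p : ℝ) / (q : ℝ)| > 1 / (q : ℝ) ^ μ

theorem irrationalityExponent_eq_top_iff {ξ : ℝ} :
    irrationalityExponent ξ = ⊤ ↔ ∀ μ : ℝ, ¬IsIrrationalityMeasure ξ μ := by
  simp only [irrationalityExponent, sInf_eq_top, Set.mem_ofPred_eq]
  constructor
  · exact fun h μ hμ => EReal.coe_ne_top μ (h _ ⟨μ, rfl, hμ⟩)
  · rintro h _ ⟨μ, rfl, hμ⟩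
    exact (h μ hμ).elim

theorem IsIrrationalityMeasure.mono {ξ μ μ' : ℝ} (h : IsIrrationalityMeasure ξ μ) (hμ : μ ≤ μ') :
    IsIrrationalityMeasure ξ μ' := by
  filter_upwards [h, eventually_ge_atTop 1] with q hq hq1 p
  refine lt_of_le_of_lt ?_ (hq p)
  have hq1 : (1 : ℝ) ≤ q := by exact_mod_cast hq1
  gcongr

namespace Irrational

variable {ξ : ℝ}

theorem abs_intCast_mul_sub_pos (hξ : Irrational ξ) {u : ℤ} (hu : u ≠ 0) (v : ℤ) :
    0 < |(u : ℝ) * ξ - v| :=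
  abs_pos.2 (sub_ne_zero.2 ((hξ.intCast_mul hu).ne_int v))

theorem abs_natCast_mul_sub_pos (hξ : Irrational ξ) {q : ℕ} (hq : 0 < q) (p : ℤ) :
    0 < |(q : ℝ) * ξ - p| := by
  simpa using hξ.abs_intCast_mul_sub_pos (u := q) (by exact_mod_cast hq.ne') p

theorem tendsto_natAbs_atTop (hξ : Irrational ξ) {u v : ℕ → ℤ} (hu : ∀ n, u n ≠ 0)
    (h : Tendsto (fun n => (u n : ℝ) * ξ - v n) atTop (𝓝 0)) :
    Tendsto (fun n => (u n).natAbs) atTop atTop := by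
  have hcof : Tendsto u atTop cofinite := by
    refine le_cofinite_iff_eventually_ne.2 fun c => eventually_map.2 ?_
    rcases eq_or_ne c 0 with rfl | hc
    · exact Eventually.of_forall hu
    have habs : Tendsto (fun n => |(u n : ℝ) * ξ - v n|) atTop (𝓝 0) := by simpa using h.abs
    filter_upwards [habs.eventually (gt_mem_nhds (hξ.abs_intCast_mul_sub_pos hc (round (c * ξ))))]
      with n hn hnc
    rw [hnc] at hn
    exact hn.not_ge (round_le _ _)
  have hfib : Tendsto Int.natAbs cofinite atTop :=
    Nat.cofinite_eq_atTop ▸ Tendsto.cofinite_of_finite_preimage_singleton fun k =>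
      (Set.toFinite {(k : ℤ), -(k : ℤ)}).subset fun _ hx => Int.natAbs_eq_iff.1 hx
  exact hfib.comp hcof

theorem one_div_rpow_lt_abs_sub_div_iff (hξ : Irrational ξ) {q : ℕ} (hq : 0 < q) (p : ℤ)
    (μ : ℝ) : 1 / (q : ℝ) ^ μ < |ξ - p / q| ↔ (1 - μ) * log q < log |q * ξ - p| := by
  have hq' : (0 : ℝ) < q := by exact_mod_cast hq
  have hdiv : |ξ - p / q| = |(q : ℝ) * ξ - p| / q := by
    rw [← abs_of_pos hq', ← abs_div, abs_of_pos hq']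
    congr 1
    field_simp
  have hpow : (q : ℝ) / q ^ μ = q ^ (1 - μ) := by rw [rpow_sub hq', rpow_one]
  rw [hdiv, lt_div_iff₀ hq', one_div_mul_eq_div, hpow, ← log_rpow hq',
    log_lt_log_iff (rpow_pos_of_pos hq' _) (hξ.abs_natCast_mul_sub_pos hq p)]

theorem log_lt_log_abs_intCast_mul_sub (hξ : Irrational ξ) {q : ℤ} (hq : q ≠ 0) {μ : ℝ}
    (h : ∀ p : ℤ, |ξ - p / q.natAbs| > 1 / (q.natAbs : ℝ) ^ μ) (p : ℤ) :
    (1 - μ) * log |(q : ℝ)| < log |q * ξ - p| := by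
  obtain ⟨n, rfl | rfl⟩ := Int.eq_nat_or_neg q
  · have hn : 0 < n := by omega
    simpa using (hξ.one_div_rpow_lt_abs_sub_div_iff hn p μ).1 (by simpa using h p)
  · have hn : 0 < n := by omega
    have := (hξ.one_div_rpow_lt_abs_sub_div_iff hn (-p) μ).1 (by simpa using h (-p))
    rw [← abs_neg] at this
    simp only [Int.cast_neg, Int.cast_natCast, abs_neg, Nat.abs_cast]
    convert this using 3
    push_cast
    ring

theorem frequently_log_abs_mul_sub_le (hξ : Irrational ξ) {μ : ℝ}
    (h : ¬IsIrrationalityMeasure ξ μ) :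
    ∃ᶠ q : ℕ in atTop, 0 < q ∧ ∃ p : ℤ, log |q * ξ - p| ≤ (1 - μ) * log q := by
  rw [IsIrrationalityMeasure, not_eventually] at h
  refine (h.and_eventually (eventually_gt_atTop 0)).mono fun q ⟨hq, hq0⟩ => ⟨hq0, ?_⟩
  obtain ⟨p, hp⟩ := not_forall.1 hq
  exact ⟨p, not_lt.1 ((hξ.one_div_rpow_lt_abs_sub_div_iff hq0 p μ).not.1 hp)⟩

theorem exists_abs_mul_sub_mem_Ioc (hξ : Irrational ξ) {t : ℝ} (ht0 : 0 < t) (ht1 : t ≤ 1) :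
    ∃ q p u v : ℤ, 0 < q ∧ (q : ℝ) ≤ 1 / t ∧ |q * ξ - p| ≤ t ∧ 0 < u ∧
      |u * ξ - v| ∈ Set.Ioc (t / 2) t ∧ u * |q * ξ - p| ≤ t * q := by
  have hN : 0 < ⌊1 / t⌋₊ := Nat.floor_pos.2 (one_le_one_div ht0 ht1)
  obtain ⟨p, q, hq, hqN, hd⟩ := Real.exists_int_int_abs_mul_sub_le ξ hN
  have hqt : (q : ℝ) ≤ 1 / t :=
    (Int.cast_le.2 hqN).trans (by exact_mod_cast Nat.floor_le (by positivity))
  have hdt : |(q : ℝ) * ξ - p| ≤ t := by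
    refine hd.trans ((div_le_iff₀ (by positivity)).2 ?_)
    have := (div_lt_iff₀ ht0).1 (Nat.lt_floor_add_one (1 / t))
    linarith
  obtain ⟨m, hm, hmt⟩ := exists_nat_mul_mem_Ioc (hξ.abs_intCast_mul_sub_pos hq.ne' p) hdt
  have hmul : |((m * q : ℤ) : ℝ) * ξ - (m * p : ℤ)| = m * |q * ξ - p| := by
    rw [show ((m * q : ℤ) : ℝ) * ξ - (m * p : ℤ) = m * (q * ξ - p) by push_cast; ring, abs_mul,
      Nat.abs_cast]
  refine ⟨q, p, m * q, m * p, hq, hqt, hdt, by positivity, hmul ▸ hmt, ?_⟩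
  push_cast
  rw [mul_right_comm]
  exact mul_le_mul_of_nonneg_right hmt.2 (by positivity)

theorem log_lt_of_abs_mul_sub_le (hξ : Irrational ξ) {q : ℕ} (hq : 0 < q) (p : ℤ) {u : ℤ}
    (hu : u ≠ 0) (v : ℤ) {a b : ℝ} (hb : 0 < b)
    (hupper : |u * ξ - v| ≤ 1 / (3 * q)) (hlower : -a * (log 3 + log q) < log |u * ξ - v|)
    (hsize : b * log |(u : ℝ)| ≤ -log |u * ξ - v|)
    (hp : log |q * ξ - p| ≤ -(a * (1 + b⁻¹)) * log q) :
    log q < a * (1 + b⁻¹) * log 3 := by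
  have hq' : (0 : ℝ) < q := by exact_mod_cast hq
  have hL := hξ.abs_intCast_mul_sub_pos hu v
  have hu' : 0 < |(u : ℝ)| := by exact_mod_cast abs_pos.2 hu
  have hd := hξ.abs_natCast_mul_sub_pos hq p
  have hhalf : |((q : ℤ) : ℝ)| * |u * ξ - v| ≤ 1 / 2 := by
    rw [Int.cast_natCast, abs_of_pos hq']
    have := (le_div_iff₀ (by positivity)).1 hupper
    linarith
  have hD := abs_mul_abs_mul_sub_le_of_le_half ξ u v q p hhalf
  rw [Int.cast_natCast, abs_of_pos hq'] at hD
  have hDlog : log q + log |u * ξ - v| ≤ log |(u : ℝ)| + log |q * ξ - p| := by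
    rw [← log_mul hq'.ne' hL.ne', ← log_mul hu'.ne' hd.ne']
    exact log_le_log (mul_pos hq' hL) hD
  have hy : log |(u : ℝ)| ≤ b⁻¹ * -log |u * ξ - v| := by
    calc log |(u : ℝ)| = b⁻¹ * (b * log |(u : ℝ)|) := by field_simp
      _ ≤ b⁻¹ * -log |u * ξ - v| := mul_le_mul_of_nonneg_left hsize (by positivity)
  have hx : (1 + b⁻¹) * -log |u * ξ - v| < (1 + b⁻¹) * (a * (log 3 + log q)) :=
    mul_lt_mul_of_pos_left (by linarith) (by positivity)
  linarith

end Irrational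

namespace IsIrrationalityMeasure

variable {ξ μ : ℝ}

theorem le_sub_one_of_mem_TSet (hμ : IsIrrationalityMeasure ξ μ) (hξ : Irrational ξ) {τ : ℝ}
    (hτ : τ ∈ TSet ξ) : τ ≤ μ - 1 := by
  obtain ⟨-, u, v, hu, hL0, -, δ, hδ, hle⟩ := hτ
  have hnat := hξ.tendsto_natAbs_atTop hu hL0
  have key : ∀ᶠ n in atTop, τ - (μ - 1) < δ n := by
    filter_upwards [hnat.eventually hμ, hnat.eventually_ge_atTop 2] with n hgood h2
    have hu1 : 1 < |(u n : ℝ)| := by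
      rw [← Int.cast_abs, ← Int.natCast_natAbs]
      exact_mod_cast h2
    have hlower := hξ.log_lt_log_abs_intCast_mul_sub (hu n) hgood (v n)
    have hupper : log |(u n : ℝ) * ξ - v n| ≤ (-τ + δ n) * log |(u n : ℝ)| := by
      rw [← log_rpow (by linarith)]
      exact log_le_log (hξ.abs_intCast_mul_sub_pos (hu n) (v n)) (hle n)
    have := lt_of_mul_lt_mul_right (hlower.trans_le hupper) (log_pos hu1).le
    linarith
  linarith [ge_of_tendsto hδ (key.mono fun n h => h.le)]

theorem mem_TSet (hμ : IsIrrationalityMeasure ξ μ) (hξ : Irrational ξ) (hμ0 : 0 ≤ μ) {τ : ℝ}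
    (hτ : 0 < τ) (hτμ : τ * (μ - 1) < 1) : τ ∈ TSet ξ := by
  set t : ℕ → ℝ := fun n => rexp (-(n + 1))
  have ht0 : ∀ n, 0 < t n := fun n => exp_pos _
  have ht1 : ∀ n, t n < 1 := fun n => exp_lt_one_iff.2 (by linarith [n.cast_nonneg (α := ℝ)])
  have hlogt : ∀ n, log (t n) = -(n + 1) := fun n => log_exp _
  have hexp : Tendsto (fun n : ℕ => -((n : ℝ) + 1)) atTop atBot :=
    tendsto_neg_atTop_atBot.comp (tendsto_atTop_add_const_right _ 1 tendsto_natCast_atTop_atTop)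
  have htends : Tendsto t atTop (𝓝 0) := tendsto_exp_atBot.comp hexp
  choose q p u v hq hqt hdt hu hL hud using
    fun n => hξ.exists_abs_mul_sub_mem_Ioc (ht0 n) (ht1 n).le
  set L : ℕ → ℝ := fun n => |(u n : ℝ) * ξ - v n|
  have hLpos : ∀ n, 0 < L n := fun n => hξ.abs_intCast_mul_sub_pos (hu n).ne' (v n)
  have hlogL : ∀ n, -(n + 1) - log 2 < log (L n) ∧ log (L n) ≤ -(n + 1) := by
    intro n
    have hlo := log_lt_log (by positivity) (hL n).1
    have hhi := log_le_log (hLpos n) (hL n).2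
    rw [log_div (ht0 n).ne' two_ne_zero, hlogt] at hlo
    rw [hlogt] at hhi
    exact ⟨hlo, hhi⟩
  have hqnat : Tendsto (fun n => (q n).natAbs) atTop atTop :=
    hξ.tendsto_natAbs_atTop (fun n => (hq n).ne') (squeeze_zero_norm hdt htends)
  refine ⟨hτ, u, v, fun n => (hu n).ne', squeeze_zero_norm (fun n => (hL n).2) htends, ?_, ?_⟩
  · refine exists_tendsto_zero_forall_succ_eq_rpow hLpos (fun n => (hL n).2.trans_lt (ht1 n))
      (tendsto_atBot_mono (fun n => (hlogL n).2) hexp) (C := 1 + log 2) (fun n => ?_)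
    have h₀ := hlogL n
    have h₁ := hlogL (n + 1)
    push_cast at h₁
    exact abs_le.2 ⟨by linarith, by linarith⟩
  · refine exists_tendsto_zero_forall_le_rpow (fun n => (hL n).2.trans (ht1 n).le) ?_
    filter_upwards [hqnat.eventually hμ] with n hgood
    have hq0 : (0 : ℝ) < q n := by exact_mod_cast hq n
    have hu0 : (0 : ℝ) < u n := by exact_mod_cast hu n
    have hd := hξ.log_lt_log_abs_intCast_mul_sub (hq n).ne' hgood (p n)
    rw [abs_of_pos hq0] at hd
    rw [abs_of_pos hu0]
    exact le_rpow_neg_of_log_lt_mul_log (hLpos n) hu0 (ht0 n) (ht1 n) (hL n).2 hτ hτμ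
      (log_lt_mul_log_of_mul_le hq0 hu0 (hξ.abs_intCast_mul_sub_pos (hq n).ne' (p n)) (ht0 n) hμ0
        (hqt n) hd (hud n))

theorem tauExp_pos (hμ : IsIrrationalityMeasure ξ μ) (hξ : Irrational ξ) : 0 < tauExp ξ := by
  have hpos : 0 < max μ 1 := lt_max_of_lt_right one_pos
  have hmem : (max μ 1)⁻¹ ∈ TSet ξ := by
    refine (hμ.mono (le_max_left _ _)).mem_TSet hξ hpos.le (inv_pos.2 hpos) ?_
    rw [inv_mul_eq_div, div_lt_one hpos]
    linarith
  exact (inv_pos.2 hpos).trans_le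
    (le_csSup ⟨μ - 1, fun _ hτ => hμ.le_sub_one_of_mem_TSet hξ hτ⟩ hmem)

end IsIrrationalityMeasure

theorem Irrational.TSet_eq_empty_of_forall_not_isIrrationalityMeasure {ξ : ℝ}
    (hξ : Irrational ξ) (h : ∀ μ, ¬IsIrrationalityMeasure ξ μ) : TSet ξ = ∅ := by
  refine Set.eq_empty_of_forall_notMem
    fun τ ⟨hτ, u, v, hu, hL0, ⟨δ₁, hδ₁, hstep⟩, ⟨δ₂, hδ₂, hle⟩⟩ => ?_
  set L : ℕ → ℝ := fun n => |(u n : ℝ) * ξ - v n|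
  have hLpos : ∀ n, 0 < L n := fun n => hξ.abs_intCast_mul_sub_pos (hu n) (v n)
  have hLt : Tendsto L atTop (𝓝 0) := by simpa using hL0.abs
  have hu1 : ∀ n, (1 : ℝ) ≤ |(u n : ℝ)| := fun n => by exact_mod_cast Int.one_le_abs (hu n)
  obtain ⟨N, hN⟩ := eventually_atTop.1
    ((eventually_rpow_le_succ_of_eq_rpow hLpos hLt hδ₁ hstep (κ := 1 + τ / 2) (by linarith)).and
      (eventually_le_rpow_neg_of_le_rpow hu1 hδ₂ hle (half_lt_self hτ)))
  set c := (1 + τ / 2) * (1 + (τ / 2)⁻¹)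
  have hlarge : ∀ᶠ q : ℕ in atTop, c * log 3 < log q :=
    (tendsto_log_atTop.comp tendsto_natCast_atTop_atTop).eventually_gt_atTop _
  have hsmall : ∀ᶠ q : ℕ in atTop, 1 / (3 * q) < L N :=
    ((tendsto_const_nhds (x := (1 : ℝ))).div_atTop
      (tendsto_natCast_atTop_atTop.const_mul_atTop three_pos)).eventually (gt_mem_nhds (hLpos N))
  obtain ⟨q, ⟨hq0, p, hp⟩, hqc, hqN⟩ :=
    ((hξ.frequently_log_abs_mul_sub_le (h (c + 1))).and_eventually (hlarge.and hsmall)).exists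
  obtain ⟨m, hmN, hm, hm1⟩ :=
    exists_lt_and_succ_le hqN (hLt.eventually (ge_mem_nhds (by positivity)))
  have hlower : -(1 + τ / 2) * (log 3 + log q) < log (L (m + 1)) := by
    have hq : (0 : ℝ) < q := by exact_mod_cast hq0
    have h1 := log_lt_log (by positivity) hm
    rw [one_div, log_inv, log_mul three_ne_zero hq.ne'] at h1
    have h2 := log_le_log (rpow_pos_of_pos (hLpos m) _) (hN m hmN).1
    rw [log_rpow (hLpos m)] at h2
    nlinarith
  have hsize : τ / 2 * log |(u (m + 1) : ℝ)| ≤ -log (L (m + 1)) := by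
    have h := log_le_log (hLpos _) (hN (m + 1) (by omega)).2
    rw [log_rpow (by linarith [hu1 (m + 1)])] at h
    linarith
  exact lt_asymm hqc (hξ.log_lt_of_abs_mul_sub_le hq0 p (hu (m + 1)) (v (m + 1)) (half_pos hτ)
    hm1 hlower hsize (hp.trans_eq (by ring)))

theorem tau_eq_zero_iff_liouville (ξ : ℝ) (hξ : Irrational ξ) :
    tauExp ξ = 0 ↔ irrationalityExponent ξ = ⊤ := by
  rw [irrationalityExponent_eq_top_iff]
  refine ⟨fun h μ hμ => (hμ.tauExp_pos hξ).ne' h, fun h => ?_⟩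
  rw [tauExp, hξ.TSet_eq_empty_of_forall_not_isIrrationalityMeasure h, Real.sSup_empty]
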